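/- Let X = {v_1,...,v_k} be a separator of a connected graph G, let G_1 be a connected component of G - X, and let x ∈ V(G_1) ∪ X. If x is covered by the pair of distance vectors ({r1, r2}, d), then for any vertices u, v in G - G_1 with d_X(u) = r1, d_X(v) = r2, and d(u,v) = d, the vertex x lies on a shortest path from u to v. -/
import Mathlib

lemma sep_dist_eq {V : Type*} (G : SimpleGraph V) (hG : G.Connected)
    {k : ℕ} (hk : 0 < k) (vtx : Fin k → V) (x u : V)
    (hsep : ∀ p : G.Walk x u, ∃ i, vtx i ∈ p.support) :
    G.dist x u = ⨅ i, G.dist u (vtx i) + G.dist x (vtx i) := by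
  haveI : Nonempty (Fin k) := ⟨⟨0, hk⟩⟩
  classical
  apply le_antisymm
  · apply le_ciInf
    intro i
    calc G.dist x u ≤ G.dist x (vtx i) + G.dist (vtx i) u := hG.dist_triangle
      _ = G.dist u (vtx i) + G.dist x (vtx i) := by rw [show G.dist (vtx i) u = G.dist u (vtx i) from SimpleGraph.dist_comm, Nat.add_comm]
  · obtain ⟨p, hp⟩ := hG.exists_walk_length_eq_dist x u
    obtain ⟨i, hi⟩ := hsep p
    refine le_trans (ciInf_le (OrderBot.bddBelow _) i) ?_
    have h1 : G.dist x (vtx i) ≤ (p.takeUntil (vtx i) hi).length :=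
      SimpleGraph.dist_le _
    have h2 : G.dist u (vtx i) ≤ (p.dropUntil (vtx i) hi).length := by
      rw [G.dist_comm]; exact SimpleGraph.dist_le _
    have hlen : (p.takeUntil (vtx i) hi).length + (p.dropUntil (vtx i) hi).length
        = p.length := by
      rw [← SimpleGraph.Walk.length_append, SimpleGraph.Walk.take_spec]
    omega

/-- If X = {v_1,...,v_k} separates x from u and from v, d_X(u) = r1, d_X(v) = r2,
d(u,v) = d, and x is covered by ({r1,r2},d), then x lies on a shortest u,v-path. -/
theorem stmt_12 {V : Type*} [Fintype V] (G : SimpleGraph V) (hG : G.Connected)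
    (k : ℕ) (hk : 0 < k) (vtx : Fin k → V) (x u v : V)
    (r1 r2 : Fin k → ℕ) (d : ℕ)
    (hxu : ∀ p : G.Walk x u, ∃ i, vtx i ∈ p.support)
    (hxv : ∀ p : G.Walk x v, ∃ i, vtx i ∈ p.support)
    (hr1 : ∀ i, G.dist u (vtx i) = r1 i)
    (hr2 : ∀ i, G.dist v (vtx i) = r2 i)
    (hd : G.dist u v = d)
    (hcov : (⨅ i, r1 i + G.dist x (vtx i)) + (⨅ i, r2 i + G.dist x (vtx i)) = d) :
    G.dist u x + G.dist x v = G.dist u v := by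
  have h1 : G.dist u x = ⨅ i, r1 i + G.dist x (vtx i) := by
    rw [G.dist_comm, sep_dist_eq G hG hk vtx x u hxu]
    simp_rw [hr1]
  have h2 : G.dist x v = ⨅ i, r2 i + G.dist x (vtx i) := by
    rw [sep_dist_eq G hG hk vtx x v hxv]
    simp_rw [hr2]
  rw [h1, h2, hcov, hd]
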